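/- For 0 ≤ l < k ≤ n, the function f(λ) = (σ_k(λ)/σ_l(λ))^{1/(k-l)} is concave on the Garding cone Γ_k. -/

import Mathlib

open Finset

/-- The k-th elementary symmetric polynomial of `lam : Fin n → ℝ`. -/
noncomputable def sigma' {n : ℕ} (k : ℕ) (lam : Fin n → ℝ) : ℝ :=
  ∑ s ∈ Finset.univ.powersetCard k, ∏ i ∈ s, lam i

/-- The Garding cone `Γ_k`. -/
def Gamma {n : ℕ} (k : ℕ) : Set (Fin n → ℝ) :=
  {lam | ∀ j, 1 ≤ j → j ≤ k → 0 < sigma' j lam}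

/-- `σ_k(λ|i)`: the k-th elementary symmetric polynomial of λ with the i-th entry deleted. -/
noncomputable def sigmaDel {n : ℕ} (k : ℕ) (lam : Fin n → ℝ) (i : Fin n) : ℝ :=
  ∑ s ∈ (Finset.univ.erase i).powersetCard k, ∏ j ∈ s, lam j

/-!
The quotient is the geometric mean of the `k - l` ratios `q_j = σ_{j+1} / σ_j`, `l ≤ j < k`,
and a geometric mean of positive concave functions is concave; so it suffices that each `q_j` is
concave on `Γ_{j+1}`. Since `q_j` is homogeneous of degree one, this is its superadditivity, which
is proved by induction on `j` together with the additivity of the cone `Γ_{j+1}`, through the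
identity `(j + 2) q_{j+1}(λ) = σ_1(λ) - ∑ i, λ_i² / (λ_i + q_j(λ|i))` and the joint convexity of
`(u, g) ↦ u² / (u + g)`.

The induction needs that deleting an entry maps `Γ_{j+1}` into `Γ_j`. Along the segment from `λ` to
`(1, …, 1)`, which stays in the cone, `σ_j(·|i)` cannot vanish, because of Newton's inequality
`σ_{j+1} σ_{j-1} ≤ c σ_j²`; the latter is Laguerre's inequality `p p'' ≤ p'²` for real-rooted
polynomials, applied to a derivative of `∏ (X + λ_i)`.
-/

open Polynomial

namespace Polynomial

lemma eval_mul_eval_derivative_derivative_le_prod_X_sub_C (s : Multiset ℝ) (t : ℝ) :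
    let p := (s.map fun a => X - C a).prod
    p.eval t * (derivative (derivative p)).eval t ≤ (p.derivative.eval t) ^ 2 := by
  induction s using Multiset.induction_on with
  | empty => simp
  | cons a s ih =>
    set q := (s.map fun a => X - C a).prod
    dsimp only at ih
    simp only [Multiset.map_cons, Multiset.prod_cons, derivative_mul, derivative_add,
      derivative_sub, derivative_X, derivative_C, sub_zero, one_mul,
      eval_mul, eval_add, eval_sub, eval_X, eval_C]
    -- `p'² - p p'' = q² + (t - a)² (q'² - q q'')` for `p = (X - a) q`
    nlinarith [mul_le_mul_of_nonneg_left ih (sq_nonneg (t - a)), sq_nonneg (q.eval t)]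

theorem Splits.eval_mul_eval_derivative_derivative_le {p : ℝ[X]} (hp : p.Splits) (t : ℝ) :
    p.eval t * (derivative (derivative p)).eval t ≤ (p.derivative.eval t) ^ 2 := by
  obtain ⟨s, hs⟩ := splits_iff_exists_multiset.1 hp
  have h := eval_mul_eval_derivative_derivative_le_prod_X_sub_C s t
  rw [hs]
  simp only [derivative_C_mul, eval_mul, eval_C] at h ⊢
  nlinarith [mul_le_mul_of_nonneg_left h (sq_nonneg p.leadingCoeff)]

theorem Splits.derivative {p : ℝ[X]} (hp : p.Splits) : p.derivative.Splits := by
  rw [splits_iff_card_roots]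
  have h₁ := card_roots_le_derivative p
  have h₂ := card_roots' p.derivative
  have h₃ := natDegree_derivative_le p
  rw [← splits_iff_card_roots.1 hp] at h₃
  omega

theorem Splits.iterate_derivative {p : ℝ[X]} (hp : p.Splits) (r : ℕ) :
    (Polynomial.derivative^[r] p).Splits := by
  induction r with
  | zero => exact hp
  | succ r ih => rw [Function.iterate_succ_apply' Polynomial.derivative]; exact ih.derivative

lemma eval_zero_iterate_derivative {R : Type*} [CommSemiring R] (p : R[X]) (r : ℕ) :
    (derivative^[r] p).eval 0 = r.factorial * p.coeff r := by
  rw [← coeff_zero_eq_eval_zero, coeff_iterate_derivative, zero_add, Nat.descFactorial_self,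
    nsmul_eq_mul]

theorem Splits.coeff_mul_coeff_le {p : ℝ[X]} (hp : p.Splits) (r : ℕ) :
    (r + 2) * (p.coeff r * p.coeff (r + 2)) ≤ (r + 1) * p.coeff (r + 1) ^ 2 := by
  have h := (hp.iterate_derivative r).eval_mul_eval_derivative_derivative_le 0
  rw [← Function.iterate_succ_apply' Polynomial.derivative,
    ← Function.iterate_succ_apply' Polynomial.derivative,
    eval_zero_iterate_derivative, eval_zero_iterate_derivative,
    eval_zero_iterate_derivative] at h
  simp only [Nat.factorial_succ] at h
  push_cast at h
  have hr : (0 : ℝ) < r.factorial ^ 2 * (r + 1) := by positivity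
  nlinarith

end Polynomial

lemma add_sq_div_add_le {u v g h G : ℝ} (hg : 0 < u + g) (hh : 0 < v + h) (hG : g + h ≤ G) :
    (u + v) ^ 2 / (u + v + G) ≤ u ^ 2 / (u + g) + v ^ 2 / (v + h) := by
  rw [div_add_div _ _ hg.ne' hh.ne', div_le_div_iff₀ (by linarith) (mul_pos hg hh)]
  have hnum : 0 ≤ u ^ 2 * (v + h) + v ^ 2 * (u + g) := by positivity
  nlinarith [sq_nonneg (u * (v + h) - v * (u + g)), mul_nonneg hnum (sub_nonneg.2 hG)]

lemma Real.geom_mean_le_geom_mean_mul_arith_mean_div {α : Type*} {s : Finset α}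
    (hs : s.Nonempty) {p q : α → ℝ} (hp : ∀ j ∈ s, 0 ≤ p j) (hq : ∀ j ∈ s, 0 < q j) :
    (∏ j ∈ s, p j) ^ ((1 : ℝ) / #s)
      ≤ (∏ j ∈ s, q j) ^ ((1 : ℝ) / #s) * ((∑ j ∈ s, p j / q j) / #s) := by
  have hamgm := Real.geom_mean_le_arith_mean s (fun _ => 1) (fun j => p j / q j)
    (fun _ _ => zero_le_one) (by simpa using hs) fun j hj => div_nonneg (hp j hj) (hq j hj).le
  have hQ : 0 < (∏ j ∈ s, q j) ^ ((1 : ℝ) / #s) := by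
    have := prod_pos hq
    positivity
  simp only [Real.rpow_one, one_mul, sum_const, nsmul_eq_mul, mul_one] at hamgm
  rw [prod_div_distrib, Real.div_rpow (prod_nonneg hp) (prod_nonneg fun j hj => (hq j hj).le),
    ← one_div, div_le_iff₀ hQ] at hamgm
  linarith

theorem concaveOn_geom_mean {V α : Type*} [AddCommGroup V] [Module ℝ V] {C : Set V}
    {s : Finset α} (hs : s.Nonempty) {g : α → V → ℝ} (hconc : ∀ j ∈ s, ConcaveOn ℝ C (g j))
    (hpos : ∀ j ∈ s, ∀ x ∈ C, 0 < g j x) :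
    ConcaveOn ℝ C fun x => (∏ j ∈ s, g j x) ^ ((1 : ℝ) / #s) := by
  obtain ⟨j₀, hj₀⟩ := hs
  refine ⟨(hconc j₀ hj₀).1, fun x hx y hy a b ha hb hab => ?_⟩
  have hz := (hconc j₀ hj₀).1 hx hy ha hb hab
  set z := a • x + b • y
  set G := (∏ j ∈ s, g j z) ^ ((1 : ℝ) / #s)
  have hGx := Real.geom_mean_le_geom_mean_mul_arith_mean_div ⟨j₀, hj₀⟩
    (fun j hj => (hpos j hj x hx).le) fun j hj => hpos j hj z hz
  have hGy := Real.geom_mean_le_geom_mean_mul_arith_mean_div ⟨j₀, hj₀⟩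
    (fun j hj => (hpos j hj y hy).le) fun j hj => hpos j hj z hz
  have hcard : (0 : ℝ) < #s := by exact_mod_cast card_pos.2 ⟨j₀, hj₀⟩
  -- AM-GM with the weights `1 / g j z`, for which it is an equality at `z`
  calc a • (∏ j ∈ s, g j x) ^ ((1 : ℝ) / #s) + b • (∏ j ∈ s, g j y) ^ ((1 : ℝ) / #s)
      ≤ a * (G * ((∑ j ∈ s, g j x / g j z) / #s)) + b * (G * ((∑ j ∈ s, g j y / g j z) / #s)) :=
        add_le_add (mul_le_mul_of_nonneg_left hGx ha) (mul_le_mul_of_nonneg_left hGy hb)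
    _ = G * ((∑ j ∈ s, (a * g j x + b * g j y) / g j z) / #s) := by
        simp only [add_div, sum_add_distrib, mul_div_assoc, ← mul_sum]
        ring
    _ ≤ G * ((∑ j ∈ s, g j z / g j z) / #s) := by
        have hG : 0 ≤ G := Real.rpow_nonneg (prod_nonneg fun j hj => (hpos j hj z hz).le) _
        gcongr with j hj
        · exact (hpos j hj z hz).le
        · simpa only [smul_eq_mul] using (hconc j hj).2 hx hy ha hb hab
    _ = G := by
        rw [sum_congr rfl fun j hj => div_self (hpos j hj z hz).ne', sum_const, nsmul_one,
          div_self hcard.ne', mul_one]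

lemma ConvexCone.concaveOn_of_superadditive {V : Type*} [AddCommGroup V] [Module ℝ V]
    (C : ConvexCone ℝ V) {f : V → ℝ} (hsmul : ∀ x ∈ C, ∀ c : ℝ, 0 < c → f (c • x) = c * f x)
    (hadd : ∀ x ∈ C, ∀ y ∈ C, f x + f y ≤ f (x + y)) : ConcaveOn ℝ C f := by
  refine ⟨C.convex, fun x hx y hy a b ha hb hab => ?_⟩
  rcases ha.lt_or_eq with ha | rfl
  · rcases hb.lt_or_eq with hb | rfl
    · rw [smul_eq_mul, smul_eq_mul, ← hsmul x hx a ha, ← hsmul y hy b hb]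
      exact hadd _ (C.smul_mem ha hx) _ (C.smul_mem hb hy)
    · obtain rfl : a = 1 := by simpa using hab
      simp
  · obtain rfl : b = 1 := by simpa using hab
    simp

lemma Finset.prod_Ico_div_of_ne_zero {K : Type*} [CommGroupWithZero K] {f : ℕ → K} {m n : ℕ}
    (hmn : m ≤ n) (hf : ∀ j ∈ Icc m n, f j ≠ 0) : ∏ j ∈ Ico m n, f (j + 1) / f j = f n / f m := by
  induction n, hmn using Nat.le_induction with
  | base => simp [div_self (hf m (by simp))]
  | succ n hmn ih =>
    rw [prod_Ico_succ_top hmn, ih fun j hj => hf j (Icc_subset_Icc_right n.le_succ hj),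
      mul_comm, div_mul_div_cancel₀ (hf n (by simp [hmn]))]

namespace Garding

section Algebra

variable {ι R : Type*} [CommSemiring R]

noncomputable def esymm (k : ℕ) (A : Finset ι) (x : ι → R) : R :=
  ∑ s ∈ A.powersetCard k, ∏ i ∈ s, x i

@[simp]
lemma esymm_zero (A : Finset ι) (x : ι → R) : esymm 0 A x = 1 := by
  simp [esymm]

lemma esymm_one (A : Finset ι) (x : ι → R) : esymm 1 A x = ∑ i ∈ A, x i := by
  simp [esymm, powersetCard_one]

lemma esymm_eq_zero_of_card_lt {k : ℕ} {A : Finset ι} (h : #A < k) (x : ι → R) :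
    esymm k A x = 0 := by
  simp [esymm, powersetCard_eq_empty.2 h]

lemma esymm_const_one (k : ℕ) (A : Finset ι) : esymm k A (1 : ι → R) = (#A).choose k := by
  simp [esymm]

lemma esymm_smul (k : ℕ) (A : Finset ι) (c : R) (x : ι → R) :
    esymm k A (c • x) = c ^ k * esymm k A x := by
  rw [esymm, esymm, mul_sum]
  refine sum_congr rfl fun s hs => ?_
  simp only [Pi.smul_apply, smul_eq_mul, prod_mul_distrib, prod_const, (mem_powersetCard.1 hs).2]

lemma sum_esymm_powersetCard {r j : ℕ} (hrj : r ≤ j) (A : Finset ι) (x : ι → R) :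
    ∑ s ∈ A.powersetCard j, esymm r s x = (#A - r).choose (j - r) * esymm r A x := by
  classical
  unfold esymm
  rw [sum_comm' (t' := A.powersetCard r) (s' := fun t => (A.powersetCard j).filter (t ⊆ ·)),
    mul_sum]
  · refine sum_congr rfl fun t ht => ?_
    obtain ⟨htA, htr⟩ := mem_powersetCard.1 ht
    rw [sum_const, card_filter_powersetCard_subset t A j htA (htr ▸ hrj), htr, nsmul_eq_mul]
  · intro s t
    simp only [mem_powersetCard, mem_filter]
    constructor
    · rintro ⟨⟨hsA, hsj⟩, hts, htr⟩
      exact ⟨⟨⟨hsA, hsj⟩, hts⟩, hts.trans hsA, htr⟩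
    · rintro ⟨⟨⟨hsA, hsj⟩, hts⟩, -, htr⟩
      exact ⟨⟨hsA, hsj⟩, hts, htr⟩

lemma prod_add_const_eq_sum_esymm (s : Finset ι) (x : ι → R) (c : R) :
    ∏ i ∈ s, (x i + c) = ∑ r ∈ range (#s + 1), esymm r s x * c ^ (#s - r) := by
  classical
  rw [prod_add, ← sum_fiberwise_of_maps_to (g := card) (t := range (#s + 1))
    fun t ht => mem_range.2 (Nat.lt_succ_of_le (card_le_card (mem_powerset.1 ht)))]
  refine sum_congr rfl fun r _ => ?_
  rw [← powersetCard_eq_filter, esymm, sum_mul]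
  refine sum_congr rfl fun t ht => ?_
  rw [prod_const, card_sdiff_of_subset (mem_powersetCard.1 ht).1, (mem_powersetCard.1 ht).2]

lemma esymm_add_const (k : ℕ) (A : Finset ι) (x : ι → R) (c : R) :
    esymm k A (fun i => x i + c)
      = ∑ r ∈ range (k + 1), ((#A - r).choose (k - r) : R) * c ^ (k - r) * esymm r A x := by
  calc esymm k A (fun i => x i + c)
      = ∑ s ∈ A.powersetCard k, ∑ r ∈ range (k + 1), esymm r s x * c ^ (k - r) := by
        refine sum_congr rfl fun s hs => ?_
        rw [prod_add_const_eq_sum_esymm, (mem_powersetCard.1 hs).2]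
    _ = ∑ r ∈ range (k + 1), ((#A - r).choose (k - r) : R) * c ^ (k - r) * esymm r A x := by
        rw [sum_comm]
        refine sum_congr rfl fun r hr => ?_
        rw [← sum_mul, sum_esymm_powersetCard (Nat.lt_succ_iff.1 (mem_range.1 hr))]
        ring

variable [DecidableEq ι]

lemma esymm_insert {a : ι} {A : Finset ι} (ha : a ∉ A) (k : ℕ) (x : ι → R) :
    esymm (k + 1) (insert a A) x = x a * esymm k A x + esymm (k + 1) A x := by
  rw [esymm, powersetCard_succ_insert ha, sum_union, sum_image, add_comm, esymm, esymm, mul_sum]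
  · congr 1
    refine sum_congr rfl fun t ht => prod_insert fun hat => ha ((mem_powersetCard.1 ht).1 hat)
  · intro t ht u hu htu
    have hat : a ∉ t := fun h => ha ((mem_powersetCard.1 ht).1 h)
    have hau : a ∉ u := fun h => ha ((mem_powersetCard.1 hu).1 h)
    rw [← erase_insert hat, ← erase_insert hau, htu]
  · refine disjoint_left.2 fun s hs hs' => ?_
    obtain ⟨t, -, rfl⟩ := mem_image.1 hs'
    exact ha ((mem_powersetCard.1 hs).1 (mem_insert_self a t))

lemma esymm_of_mem {i : ι} {A : Finset ι} (hi : i ∈ A) (k : ℕ) (x : ι → R) :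
    esymm (k + 1) A x = x i * esymm k (A.erase i) x + esymm (k + 1) (A.erase i) x := by
  conv_lhs => rw [← insert_erase hi]
  exact esymm_insert (notMem_erase i A) k x

lemma sum_mul_esymm_erase (k : ℕ) (A : Finset ι) (x : ι → R) :
    ∑ i ∈ A, x i * esymm k (A.erase i) x = (k + 1) * esymm (k + 1) A x := by
  induction A using Finset.induction_on generalizing k with
  | empty => simp [esymm_eq_zero_of_card_lt (show #(∅ : Finset ι) < k + 1 by simp)]
  | @insert a A ha ih =>
    have herase : ∀ i ∈ A, (insert a A).erase i = insert a (A.erase i) := fun i hi =>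
      erase_insert_of_ne fun h => ha (h ▸ hi)
    rw [sum_insert ha, erase_insert ha, sum_congr rfl fun i hi => by rw [herase i hi]]
    cases k with
    | zero => simp [esymm_one, sum_insert ha]
    | succ k =>
      have hins : ∀ i ∈ A, x i * esymm (k + 1) (insert a (A.erase i)) x
          = x a * (x i * esymm k (A.erase i) x) + x i * esymm (k + 1) (A.erase i) x :=
        fun i _ => by rw [esymm_insert (fun h => ha (mem_of_mem_erase h))]; ring
      rw [sum_congr rfl hins, sum_add_distrib, ← mul_sum, ih, ih, esymm_insert ha]
      push_cast
      ring

end Algebra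

lemma mul_esymm_add_two {ι R : Type*} [CommRing R] [DecidableEq ι] (k : ℕ) (A : Finset ι)
    (x : ι → R) :
    (k + 2) * esymm (k + 2) A x
      = esymm 1 A x * esymm (k + 1) A x - ∑ i ∈ A, x i ^ 2 * esymm k (A.erase i) x := by
  have hsplit : ∀ i ∈ A, x i * esymm (k + 1) (A.erase i) x
      = x i * esymm (k + 1) A x - x i ^ 2 * esymm k (A.erase i) x := fun i hi => by
    rw [esymm_of_mem hi k x]; ring
  have h := sum_mul_esymm_erase (k + 1) A x
  rw [sum_congr rfl hsplit, sum_sub_distrib, ← sum_mul, ← esymm_one] at h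
  push_cast at h
  linear_combination -h

theorem esymm_mul_esymm_le {ι : Type*} (x : ι → ℝ) {k : ℕ} {A : Finset ι} (hk : k + 2 ≤ #A) :
    ((#A : ℝ) - k) * (esymm (k + 2) A x * esymm k A x)
      ≤ ((#A : ℝ) - k - 1) * esymm (k + 1) A x ^ 2 := by
  have hp : (∏ i ∈ A, (X + C (x i))).Splits := Splits.prod fun i _ => Splits.X_add_C (x i)
  have hcoeff : ∀ m ≤ #A, (∏ i ∈ A, (X + C (x i))).coeff m = esymm (#A - m) A x :=
    fun m hm => prod_X_add_C_coeff A x hm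
  obtain ⟨r, hr⟩ : ∃ r, #A = k + 2 + r := ⟨#A - (k + 2), by omega⟩
  have h := hp.coeff_mul_coeff_le r
  rw [hcoeff r (by omega), hcoeff (r + 1) (by omega), hcoeff (r + 2) (by omega),
    show #A - r = k + 2 by omega, show #A - (r + 1) = k + 1 by omega,
    show #A - (r + 2) = k by omega] at h
  rw [hr]
  push_cast
  convert h using 2 <;> ring

section Cone

variable {ι : Type*}

def gardingCone (k : ℕ) (A : Finset ι) : Set (ι → ℝ) :=
  {x | ∀ j, 1 ≤ j → j ≤ k → 0 < esymm j A x}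

noncomputable def esymmRatio (k : ℕ) (A : Finset ι) (x : ι → ℝ) : ℝ :=
  esymm (k + 1) A x / esymm k A x

variable {k j : ℕ} {A : Finset ι} {x y w : ι → ℝ}

lemma mem_gardingCone_zero : x ∈ gardingCone 0 A :=
  fun _ hj1 hj0 => absurd (hj1.trans hj0) (by norm_num)

lemma esymm_pos_of_mem (hx : x ∈ gardingCone k A) (hj : j ≤ k) : 0 < esymm j A x := by
  rcases j with _ | j
  · simp
  · exact hx (j + 1) (Nat.succ_pos j) hj

lemma gardingCone_anti (h : j ≤ k) : gardingCone k A ⊆ gardingCone j A :=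
  fun _ hx i hi hij => hx i hi (hij.trans h)

lemma mem_gardingCone_succ :
    x ∈ gardingCone (k + 1) A ↔ x ∈ gardingCone k A ∧ 0 < esymm (k + 1) A x := by
  refine ⟨fun hx => ⟨gardingCone_anti k.le_succ hx, hx _ k.succ_pos le_rfl⟩, ?_⟩
  rintro ⟨hx, hk⟩ j hj1 hj
  rcases hj.lt_or_eq with hj | rfl
  · exact hx j hj1 (Nat.lt_succ_iff.1 hj)
  · exact hk

lemma card_le_of_esymm_pos (h : 0 < esymm k A x) : k ≤ #A := by
  by_contra! hk
  rw [esymm_eq_zero_of_card_lt hk] at h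
  exact h.false

lemma smul_mem_gardingCone {c : ℝ} (hc : 0 < c) (hx : x ∈ gardingCone k A) :
    c • x ∈ gardingCone k A := fun j hj1 hj => by
  rw [esymm_smul]
  exact mul_pos (pow_pos hc j) (hx j hj1 hj)

lemma segment_one_mem_gardingCone (hx : x ∈ gardingCone k A) {t : ℝ} (ht : t ∈ Set.Icc (0 : ℝ) 1) :
    (fun i => (1 - t) * x i + t) ∈ gardingCone k A := by
  intro j hj1 hjk
  obtain ⟨ht0, ht1⟩ := ht
  change 0 < esymm j A (fun i => ((1 - t) • x) i + t)
  rw [esymm_add_const]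
  simp only [esymm_smul]
  have hterm : ∀ r ∈ range (j + 1),
      0 ≤ ((#A - r).choose (j - r) : ℝ) * t ^ (j - r) * ((1 - t) ^ r * esymm r A x) :=
    fun r hr => by
      have := esymm_pos_of_mem hx ((Nat.lt_succ_iff.1 (mem_range.1 hr)).trans hjk)
      have : 0 ≤ 1 - t := by linarith
      positivity
  rcases ht1.lt_or_eq with ht1 | rfl
  · refine sum_pos' hterm ⟨j, self_mem_range_succ j, ?_⟩
    have := esymm_pos_of_mem hx hjk
    have : 0 < 1 - t := by linarith
    simp only [Nat.sub_self, Nat.choose_zero_right, pow_zero]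
    positivity
  · refine sum_pos' hterm ⟨0, by simp, ?_⟩
    have := Nat.choose_pos ((hjk.trans (card_le_of_esymm_pos (esymm_pos_of_mem hx le_rfl))))
    simp only [Nat.sub_zero, pow_zero, esymm_zero, one_pow, mul_one]
    exact_mod_cast this

lemma continuous_esymm_segment (k : ℕ) (A : Finset ι) (x : ι → ℝ) :
    Continuous fun t : ℝ => esymm k A (fun i => (1 - t) * x i + t) := by
  unfold esymm
  fun_prop

lemma esymmRatio_smul {c : ℝ} (hc : c ≠ 0) (k : ℕ) (A : Finset ι) (x : ι → ℝ) :
    esymmRatio k A (c • x) = c * esymmRatio k A x := by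
  rw [esymmRatio, esymmRatio, esymm_smul, esymm_smul, pow_succ, mul_assoc,
    mul_div_mul_left _ _ (pow_ne_zero k hc), mul_div_assoc]

variable [DecidableEq ι]

lemma esymm_erase_ne_zero {i : ι} (hi : i ∈ A) (hx : x ∈ gardingCone (k + 2) A)
    (hx' : x ∈ gardingCone k (A.erase i)) : esymm (k + 1) (A.erase i) x ≠ 0 := by
  intro h0
  have htop : 0 < esymm (k + 2) (A.erase i) x := by
    have := esymm_of_mem hi (k + 1) x
    rw [h0, mul_zero, zero_add] at this
    exact this ▸ hx (k + 2) (by omega) le_rfl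
  have hbot := esymm_pos_of_mem hx' le_rfl
  have hcard := card_le_of_esymm_pos htop
  have hnewton := esymm_mul_esymm_le x hcard
  rw [h0] at hnewton
  have : (0 : ℝ) < #(A.erase i) - k := by
    rw [sub_pos]; exact_mod_cast (show k < #(A.erase i) by omega)
  nlinarith [mul_pos htop hbot]

theorem mem_gardingCone_erase {i : ι} (hi : i ∈ A) (hx : x ∈ gardingCone (k + 1) A) :
    x ∈ gardingCone k (A.erase i) := by
  induction k generalizing x with
  | zero => exact mem_gardingCone_zero
  | succ k ih =>
    refine mem_gardingCone_succ.2 ⟨ih (gardingCone_anti k.succ.le_succ hx), ?_⟩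
    set f := fun t : ℝ => esymm (k + 1) (A.erase i) (fun i => (1 - t) * x i + t)
    have hf : ∀ t ∈ Set.Icc (0 : ℝ) 1, f t ≠ 0 := fun t ht =>
      have hxt := segment_one_mem_gardingCone hx ht
      esymm_erase_ne_zero hi hxt (ih (gardingCone_anti k.succ.le_succ hxt))
    have hf1 : 0 < f 1 := by
      have hcard : k + 1 < #A := card_le_of_esymm_pos (esymm_pos_of_mem hx le_rfl)
      simp only [f, sub_self, zero_mul, zero_add]
      rw [← Pi.one_def, esymm_const_one, card_erase_of_mem hi]
      exact_mod_cast Nat.choose_pos (by omega)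
    have hf0 : f 0 = esymm (k + 1) (A.erase i) x := by simp [f]
    rw [← hf0]
    by_contra! hneg
    obtain ⟨t, ht, hft⟩ := intermediate_value_Icc zero_le_one
      (continuous_esymm_segment (k + 1) (A.erase i) x).continuousOn ⟨hneg, hf1.le⟩
    exact hf t ht hft

lemma add_esymmRatio_erase {i : ι} (hi : i ∈ A) (h : esymm k (A.erase i) w ≠ 0) :
    w i + esymmRatio k (A.erase i) w = esymm (k + 1) A w / esymm k (A.erase i) w := by
  rw [esymmRatio, esymm_of_mem hi, add_div, mul_div_cancel_right₀ _ h]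

lemma esymmRatio_succ_eq (hA : esymm (k + 1) A w ≠ 0)
    (herase : ∀ i ∈ A, esymm k (A.erase i) w ≠ 0) :
    (k + 2) * esymmRatio (k + 1) A w
      = ∑ i ∈ A, w i - ∑ i ∈ A, w i ^ 2 / (w i + esymmRatio k (A.erase i) w) := by
  have hterm : ∀ i ∈ A, w i ^ 2 / (w i + esymmRatio k (A.erase i) w)
      = w i ^ 2 * esymm k (A.erase i) w / esymm (k + 1) A w := fun i hi => by
    rw [add_esymmRatio_erase hi (herase i hi), div_div_eq_mul_div]
  rw [sum_congr rfl hterm, ← sum_div, ← esymm_one, esymmRatio, show k + 1 + 1 = k + 2 from rfl,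
    ← mul_div_assoc, mul_esymm_add_two, sub_div, mul_div_cancel_right₀ _ hA]

lemma esymmRatio_succ_superadditive (hx : x ∈ gardingCone (k + 2) A)
    (hy : y ∈ gardingCone (k + 2) A) (hxy : x + y ∈ gardingCone (k + 1) A)
    (herase : ∀ i ∈ A, esymmRatio k (A.erase i) x + esymmRatio k (A.erase i) y
      ≤ esymmRatio k (A.erase i) (x + y)) :
    esymmRatio (k + 1) A x + esymmRatio (k + 1) A y ≤ esymmRatio (k + 1) A (x + y) := by
  have hpos : ∀ w ∈ gardingCone (k + 1) A, ∀ i ∈ A, 0 < esymm k (A.erase i) w :=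
    fun w hw i hi => esymm_pos_of_mem (mem_gardingCone_erase hi hw) le_rfl
  have hden : ∀ w ∈ gardingCone (k + 1) A, ∀ i ∈ A, 0 < w i + esymmRatio k (A.erase i) w :=
    fun w hw i hi => by
      rw [add_esymmRatio_erase hi (hpos w hw i hi).ne']
      exact div_pos (esymm_pos_of_mem hw le_rfl) (hpos w hw i hi)
  have hid : ∀ w ∈ gardingCone (k + 1) A, (k + 2) * esymmRatio (k + 1) A w
      = ∑ i ∈ A, w i - ∑ i ∈ A, w i ^ 2 / (w i + esymmRatio k (A.erase i) w) :=
    fun w hw => esymmRatio_succ_eq (esymm_pos_of_mem hw le_rfl).ne' fun i hi => (hpos w hw i hi).ne'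
  have hx' := gardingCone_anti (k + 1).le_succ hx
  have hy' := gardingCone_anti (k + 1).le_succ hy
  have hterm : ∀ i ∈ A, (x + y) i ^ 2 / ((x + y) i + esymmRatio k (A.erase i) (x + y))
      ≤ x i ^ 2 / (x i + esymmRatio k (A.erase i) x)
        + y i ^ 2 / (y i + esymmRatio k (A.erase i) y) := fun i hi =>
    add_sq_div_add_le (hden x hx' i hi) (hden y hy' i hi) (herase i hi)
  rw [← mul_le_mul_iff_right₀ (by positivity : (0 : ℝ) < k + 2), mul_add, hid x hx', hid y hy',
    hid _ hxy]
  have hsum := sum_le_sum hterm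
  simp only [Pi.add_apply, sum_add_distrib] at hsum ⊢
  linarith

theorem add_mem_gardingCone_and_superadditive (k : ℕ) :
    ∀ (A : Finset ι) (x y : ι → ℝ), x ∈ gardingCone (k + 1) A → y ∈ gardingCone (k + 1) A →
      x + y ∈ gardingCone (k + 1) A ∧
        esymmRatio k A x + esymmRatio k A y ≤ esymmRatio k A (x + y) := by
  induction k with
  | zero =>
    intro A x y hx hy
    have hratio : ∀ w : ι → ℝ, esymmRatio 0 A w = esymm 1 A w := fun w => by simp [esymmRatio]
    have hadd : esymm 1 A (x + y) = esymm 1 A x + esymm 1 A y := by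
      simp only [esymm_one, Pi.add_apply, sum_add_distrib]
    refine ⟨mem_gardingCone_succ.2 ⟨mem_gardingCone_zero, ?_⟩, by rw [hratio, hratio, hratio, hadd]⟩
    rw [zero_add, hadd]
    exact add_pos (esymm_pos_of_mem hx le_rfl) (esymm_pos_of_mem hy le_rfl)
  | succ k ih =>
    intro A x y hx hy
    have hxy := (ih A x y (gardingCone_anti k.succ.le_succ hx)
      (gardingCone_anti k.succ.le_succ hy)).1
    have hsup := esymmRatio_succ_superadditive hx hy hxy fun i hi =>
      (ih (A.erase i) x y (mem_gardingCone_erase hi hx) (mem_gardingCone_erase hi hy)).2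
    refine ⟨mem_gardingCone_succ.2 ⟨hxy, ?_⟩, hsup⟩
    have hratio : ∀ w ∈ gardingCone (k + 2) A, 0 < esymmRatio (k + 1) A w := fun w hw =>
      div_pos (esymm_pos_of_mem hw le_rfl) (esymm_pos_of_mem hw (k + 1).le_succ)
    have h := mul_pos ((add_pos (hratio x hx) (hratio y hy)).trans_le hsup)
      (esymm_pos_of_mem hxy le_rfl)
    rwa [esymmRatio, div_mul_cancel₀ _ (esymm_pos_of_mem hxy le_rfl).ne'] at h

lemma add_mem_gardingCone (hx : x ∈ gardingCone k A)
    (hy : y ∈ gardingCone k A) : x + y ∈ gardingCone k A := by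
  rcases k with _ | k
  · exact mem_gardingCone_zero
  · exact (add_mem_gardingCone_and_superadditive k A x y hx hy).1

def gardingConvexCone (k : ℕ) (A : Finset ι) : ConvexCone ℝ (ι → ℝ) where
  carrier := gardingCone k A
  smul_mem' _ hc _ hx := smul_mem_gardingCone hc hx
  add_mem' _ hx _ hy := add_mem_gardingCone hx hy

lemma concaveOn_esymmRatio {k m : ℕ} (h : k + 1 ≤ m) (A : Finset ι) :
    ConcaveOn ℝ (gardingCone m A) (esymmRatio k A) :=
  ((gardingConvexCone (k + 1) A).concaveOn_of_superadditive
    (fun x _ _ hc => esymmRatio_smul hc.ne' k A x)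
    (fun x hx y hy => (add_mem_gardingCone_and_superadditive k A x y hx hy).2)).subset
    (gardingCone_anti h) (gardingConvexCone m A).convex

end Cone

end Garding

open Garding in
theorem quotient_concave_general {n k l : ℕ} (hl : l < k) :
    ConcaveOn ℝ (Gamma k : Set (Fin n → ℝ))
      (fun x => (sigma' k x / sigma' l x) ^ ((1 : ℝ) / ((k : ℝ) - (l : ℝ)))) := by
  have hcard : ((#(Ico l k) : ℕ) : ℝ) = k - l := by rw [Nat.card_Ico, Nat.cast_sub hl.le]
  have hconc := concaveOn_geom_mean (nonempty_Ico.2 hl)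
    (fun j hj => concaveOn_esymmRatio (mem_Ico.1 hj).2 (univ : Finset (Fin n)))
    fun j hj x hx => div_pos (esymm_pos_of_mem hx (mem_Ico.1 hj).2)
      (esymm_pos_of_mem hx (mem_Ico.1 hj).2.le)
  rw [hcard] at hconc
  refine hconc.congr fun x hx => ?_
  exact congrArg (· ^ _) (prod_Ico_div_of_ne_zero (f := fun j => esymm j univ x) hl.le
    fun j hj => (esymm_pos_of_mem hx (mem_Icc.1 hj).2).ne')

/-- For 0 ≤ l < k ≤ n, the function (σ_k/σ_l)^{1/(k-l)} is concave on Γ_k. -/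
theorem quotient_concave {n k l : ℕ} (hl : l < k) (hk : k ≤ n) :
    ConcaveOn ℝ (Gamma k : Set (Fin n → ℝ))
      (fun x => (sigma' k x / sigma' l x) ^ ((1 : ℝ) / ((k : ℝ) - (l : ℝ)))) :=
  quotient_concave_general hl
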